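/- arXiv:2207.03026 — 11 statements merged into one kernel-verified Lean document; each statement's English description precedes it below -/
import Mathlib

section
/- Let m ≥ 3 and define, for 1 ≤ k ≤ m−1, the zone Z_k ⊆ ℝ by: Z_1 = (−∞, (a_1 + a_3)/2]; Z_k = ((a_{k−1} + a_{k+1})/2, (a_k + a_{k+2})/2] for 2 ≤ k ≤ m−2; Z_{m−1} = ((a_{m−2} + a_m)/2, +∞). Then the zones Z_1,…,Z_{m−1} partition ℝ, and for every t ∈ Z_k the pair (a_k, a_{k+1}) is a peak of t, i.e., max(|a_k − t|, |a_{k+1} − t|) ≤ max(|a_j − t|, |a_{j+1} − t|) for every 1 ≤ j ≤ m−1. -/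
/-- Max-variant cost of an agent at `t` for two facilities at `y = (y₁, y₂)`. -/
noncomputable def cost (y : ℝ × ℝ) (t : ℝ) : ℝ := max |y.1 - t| |y.2 - t|

/-- The zone `Z_k` of the adjacent pair `(a k, a (k+1))`, for `1 ≤ k ≤ m - 1`
(1-based indices). -/
def Z (a : ℕ → ℝ) (m k : ℕ) : Set ℝ :=
  if k = 1 then Set.Iic ((a 1 + a 3) / 2)
  else if k = m - 1 then Set.Ioi ((a (m - 2) + a m) / 2)
  else Set.Ioc ((a (k - 1) + a (k + 1)) / 2) ((a k + a (k + 2)) / 2)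

private lemma maxabs (x y t : ℝ) (hxy : x ≤ y) :
    max |x - t| |y - t| = max (t - x) (y - t) := by
  rcases abs_cases (x - t) with ⟨h1, h1'⟩ | ⟨h1, h1'⟩ <;>
    rcases abs_cases (y - t) with ⟨h2, h2'⟩ | ⟨h2, h2'⟩ <;>
    rw [h1, h2] <;>
    rw [max_def, max_def] <;>
    split_ifs <;> linarith

theorem stmt_1 (m : ℕ) (hm : 3 ≤ m) (a : ℕ → ℝ)
    (ha : ∀ j k : ℕ, 1 ≤ j → j ≤ k → k ≤ m → a j ≤ a k) :
    (∀ t : ℝ, ∃! k : ℕ, 1 ≤ k ∧ k ≤ m - 1 ∧ t ∈ Z a m k) ∧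
    (∀ k : ℕ, 1 ≤ k → k ≤ m - 1 → ∀ t ∈ Z a m k, ∀ j : ℕ, 1 ≤ j → j ≤ m - 1 →
      cost (a k, a (k + 1)) t ≤ cost (a j, a (j + 1)) t) := by
  set b : ℕ → ℝ := fun k => (a (k - 1) + a (k + 1)) / 2 with hb
  have hbmono : ∀ j k : ℕ, 2 ≤ j → j ≤ k → k ≤ m - 1 → b j ≤ b k := by
    intro j k hj hjk hk
    have h1 : a (j - 1) ≤ a (k - 1) := ha _ _ (by omega) (by omega) (by omega)
    have h2 : a (j + 1) ≤ a (k + 1) := ha _ _ (by omega) (by omega) (by omega)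
    simp only [hb]; linarith
  have hmem : ∀ k : ℕ, 1 ≤ k → k ≤ m - 1 → ∀ t : ℝ,
      (t ∈ Z a m k ↔ (k = 1 ∨ b k < t) ∧ (k = m - 1 ∨ t ≤ b (k + 1))) := by
    intro k hk1 hk2 t
    unfold Z
    rcases eq_or_ne k 1 with rfl | hne1
    · have h1 : (1 : ℕ) ≠ m - 1 := by omega
      simp only [if_pos rfl, Set.mem_Iic]
      constructor
      · intro h
        exact ⟨Or.inl (by trivial), Or.inr (by simpa [hb] using h)⟩
      · rintro ⟨-, h | h⟩
        · omega
        · simpa [hb] using h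
    · rcases eq_or_ne k (m - 1) with rfl | hne2
      · simp only [if_neg hne1, if_pos rfl, Set.mem_Ioi]
        have he : m - 1 - 1 = m - 2 := by omega
        have he2 : m - 1 + 1 = m := by omega
        constructor
        · intro h
          exact ⟨Or.inr (by simpa [hb, he, he2] using h), Or.inl (by trivial)⟩
        · rintro ⟨h | h, -⟩
          · omega
          · simpa [hb, he, he2] using h
      · simp only [if_neg hne1, if_neg hne2, Set.mem_Ioc]
        have he : k + 1 - 1 = k := by omega
        constructor
        · rintro ⟨h1, h2⟩
          exact ⟨Or.inr (by simpa [hb] using h1),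
                 Or.inr (by simpa [hb, he] using h2)⟩
        · rintro ⟨h1 | h1, h2 | h2⟩
          · omega
          · omega
          · omega
          · exact ⟨by simpa [hb] using h1, by simpa [hb, he] using h2⟩
  constructor
  · -- partition
    intro t
    have hdisj : ∀ j k : ℕ, 1 ≤ j → j ≤ m - 1 → 1 ≤ k → k ≤ m - 1 → j < k →
        t ∈ Z a m j → t ∈ Z a m k → False := by
      intro j k hj1 hj2 hk1 hk2 hjk htj htk
      rw [hmem j hj1 hj2 t] at htj
      rw [hmem k hk1 hk2 t] at htk
      have h1 : t ≤ b (j + 1) := by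
        rcases htj.2 with h | h
        · omega
        · exact h
      have h2 : b k < t := by
        rcases htk.1 with h | h
        · omega
        · exact h
      have h3 : b (j + 1) ≤ b k := hbmono _ _ (by omega) (by omega) (by omega)
      linarith
    set P : ℕ → Prop := fun k => 2 ≤ k ∧ b k < t with hP
    set k₀ := Nat.findGreatest P (m - 1) with hk₀
    rcases Nat.eq_zero_or_pos k₀ with h0 | h0
    · -- no b k < t, so t ≤ b 2, zone 1
      have ht2 : t ≤ b 2 := by
        by_contra hc
        push_neg at hc
        have hmn : 2 ≤ m - 1 := by omega
        have h2 : 2 ≤ Nat.findGreatest P (m - 1) :=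
          Nat.le_findGreatest hmn ⟨le_refl 2, hc⟩
        rw [← hk₀] at h2
        omega
      refine ⟨1, ⟨le_refl 1, by omega, ?_⟩, ?_⟩
      · rw [hmem 1 le_rfl (by omega) t]
        exact ⟨Or.inl (by trivial), Or.inr ht2⟩
      · rintro y ⟨hy1, hy2, hy3⟩
        by_contra hne
        have : 1 < y := by omega
        exact hdisj 1 y le_rfl (by omega) hy1 hy2 this
          (by rw [hmem 1 le_rfl (by omega) t]; exact ⟨Or.inl (by trivial), Or.inr ht2⟩) hy3
    · have hspec : P k₀ := Nat.findGreatest_of_ne_zero hk₀.symm (by omega)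
      have hk₀le : k₀ ≤ m - 1 := Nat.findGreatest_le _
      rcases eq_or_ne k₀ (m - 1) with he | hne
      · -- zone m - 1
        have hzm : t ∈ Z a m (m - 1) := by
          rw [hmem (m - 1) (by omega) le_rfl t]
          exact ⟨Or.inr (he ▸ hspec.2), Or.inl (by trivial)⟩
        refine ⟨m - 1, ⟨by omega, le_rfl, hzm⟩, ?_⟩
        rintro y ⟨hy1, hy2, hy3⟩
        by_contra hne'
        exact hdisj y (m - 1) hy1 hy2 (by omega) le_rfl (by omega) hy3 hzm
      · -- zone k₀, with 2 ≤ k₀ ≤ m - 2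
        have hnext : ¬ P (k₀ + 1) :=
          Nat.findGreatest_is_greatest (n := m - 1) (by omega) (by omega)
        have ht : t ≤ b (k₀ + 1) := by
          by_contra hc
          push_neg at hc
          exact hnext ⟨by omega, hc⟩
        have hz : t ∈ Z a m k₀ := by
          rw [hmem k₀ (by omega) hk₀le t]
          exact ⟨Or.inr hspec.2, Or.inr ht⟩
        refine ⟨k₀, ⟨by omega, hk₀le, hz⟩, ?_⟩
        rintro y ⟨hy1, hy2, hy3⟩
        by_contra hne'
        rcases lt_or_gt_of_ne hne' with h | h
        · exact hdisj y k₀ hy1 hy2 (by omega) hk₀le h hy3 hz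
        · exact hdisj k₀ y (by omega) hk₀le hy1 hy2 h hz hy3
  · -- cost minimality
    intro k hk1 hk2 t ht j hj1 hj2
    have hcostk : cost (a k, a (k + 1)) t = max (t - a k) (a (k + 1) - t) := by
      unfold cost
      exact maxabs _ _ _ (ha _ _ (by omega) (by omega) (by omega))
    have hcostj : cost (a j, a (j + 1)) t = max (t - a j) (a (j + 1) - t) := by
      unfold cost
      exact maxabs _ _ _ (ha _ _ (by omega) (by omega) (by omega))
    rw [hcostk, hcostj]
    rw [hmem k hk1 hk2 t] at ht
    rcases lt_trichotomy j k with h | h | h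
    · -- j < k, so k ≥ 2 and b k < t
      have hbk : b k < t := by
        rcases ht.1 with h' | h'
        · omega
        · exact h'
      have hmid : a (k - 1) + a (k + 1) < 2 * t := by
        have : b k = (a (k - 1) + a (k + 1)) / 2 := rfl
        linarith [this ▸ hbk]
      have h1 : a j ≤ a (k - 1) := ha _ _ (by omega) (by omega) (by omega)
      have h2 : a (k - 1) ≤ a k := ha _ _ (by omega) (by omega) (by omega)
      apply max_le
      · exact le_max_of_le_left (by linarith)
      · exact le_max_of_le_left (by linarith)
    · subst h; rfl
    · -- j > k, so k ≤ m - 2 and t ≤ b (k + 1)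
      have hbk : t ≤ b (k + 1) := by
        rcases ht.2 with h' | h'
        · omega
        · exact h'
      have hmid : 2 * t ≤ a k + a (k + 2) := by
        have he : k + 1 - 1 = k := by omega
        have : b (k + 1) = (a k + a (k + 2)) / 2 := by simp [hb, he]
        linarith [this ▸ hbk]
      have h1 : a (k + 2) ≤ a (j + 1) := ha _ _ (by omega) (by omega) (by omega)
      have h2 : a (k + 1) ≤ a (k + 2) := ha _ _ (by omega) (by omega) (by omega)
      apply max_le
      · exact le_max_of_le_right (by linarith)
      · exact le_max_of_le_right (by linarith)
end

section
/- Agents' preferences over AP are single peaked: for every t ∈ ℝ, if (a_l, a_{l+1}) is a peak of t, then the function k ↦ max(|a_k − t|, |a_{k+1} − t|) on {1,…,m−1} is nonincreasing for k ≤ l and nondecreasing for k ≥ l; in particular the cost of the pair (a_k, a_{k+1}) to an agent located at t weakly increases as |k − l| increases on each side of l. -/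
lemma cost_eq_of_le {y1 y2 t : ℝ} (h : y1 ≤ y2) :
    cost (y1, y2) t = max (y2 - t) (t - y1) := by
  have h1 := le_max_left (y2 - t) (t - y1)
  have h2 := le_max_right (y2 - t) (t - y1)
  unfold cost
  apply le_antisymm
  · apply max_le <;> rw [abs_le] <;> constructor <;> linarith
  · apply max_le
    · exact le_trans (le_abs_self _) (le_max_right _ _)
    · have : t - y1 ≤ |y1 - t| := by rw [abs_sub_comm]; exact le_abs_self _
      exact le_trans this (le_max_left _ _)

theorem stmt_2 (m : ℕ) (hm : 2 ≤ m) (a : ℕ → ℝ)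
    (ha : ∀ j k : ℕ, 1 ≤ j → j ≤ k → k ≤ m → a j ≤ a k)
    (t : ℝ) (l : ℕ) (hl1 : 1 ≤ l) (hl2 : l < m)
    (hpeak : ∀ j : ℕ, 1 ≤ j → j < m →
      cost (a l, a (l + 1)) t ≤ cost (a j, a (j + 1)) t) :
    (∀ j k : ℕ, 1 ≤ j → j ≤ k → k ≤ l →
      cost (a k, a (k + 1)) t ≤ cost (a j, a (j + 1)) t) ∧
    (∀ j k : ℕ, l ≤ j → j ≤ k → k < m →
      cost (a j, a (j + 1)) t ≤ cost (a k, a (k + 1)) t) := by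
  have hce : ∀ k : ℕ, 1 ≤ k → k < m →
      cost (a k, a (k + 1)) t = max (a (k + 1) - t) (t - a k) := by
    intro k hk1 hkm
    exact cost_eq_of_le (ha k (k + 1) hk1 (Nat.le_succ k) hkm)
  constructor
  · intro j k hj1 hjk hkl
    have hk1 : 1 ≤ k := le_trans hj1 hjk
    have hjm : j < m := lt_of_le_of_lt (le_trans hjk hkl) hl2
    have hkm : k < m := lt_of_le_of_lt hkl hl2
    have hpl := hpeak j hj1 hjm
    rw [hce j hj1 hjm, hce k hk1 hkm] at *
    rw [hce l hl1 hl2] at hpl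
    have h1 : a (k + 1) ≤ a (l + 1) := ha (k + 1) (l + 1) (by omega) (by omega) (by omega)
    have h2 : a j ≤ a k := ha j k hj1 hjk (by omega)
    apply max_le
    · calc a (k + 1) - t ≤ a (l + 1) - t := by linarith
        _ ≤ max (a (l + 1) - t) (t - a l) := le_max_left _ _
        _ ≤ max (a (j + 1) - t) (t - a j) := hpl
    · calc t - a k ≤ t - a j := by linarith
        _ ≤ max (a (j + 1) - t) (t - a j) := le_max_right _ _
  · intro j k hlj hjk hkm
    have hj1 : 1 ≤ j := le_trans hl1 hlj
    have hjm : j < m := lt_of_le_of_lt hjk hkm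
    have hk1 : 1 ≤ k := le_trans hj1 hjk
    have hpl := hpeak k hk1 hkm
    rw [hce j hj1 hjm, hce k hk1 hkm] at *
    rw [hce l hl1 hl2] at hpl
    have h1 : a (j + 1) ≤ a (k + 1) := ha (j + 1) (k + 1) (by omega) (by omega) (by omega)
    have h2 : a l ≤ a j := ha l j hl1 hlj (by omega)
    apply max_le
    · calc a (j + 1) - t ≤ a (k + 1) - t := by linarith
        _ ≤ max (a (k + 1) - t) (t - a k) := le_max_left _ _
    · calc t - a j ≤ t - a l := by linarith
        _ ≤ max (a (l + 1) - t) (t - a l) := le_max_right _ _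
        _ ≤ max (a (k + 1) - t) (t - a k) := hpl
end

section
/- For every location profile x ∈ ℝ^n there exists an adjacent pair (a_k, a_{k+1}) ∈ AP whose sum cost is minimal among all feasible outcomes: sc((a_k, a_{k+1}), x) ≤ sc(y, x) for every feasible outcome y. In other words, an optimal solution under the sum cost objective can always be found in AP. -/
/-- A feasible outcome places the two facilities at two distinct copies of the
multiset `{a 1, …, a m}` (1-based indices). -/
def Feasible (m : ℕ) (a : ℕ → ℝ) (y : ℝ × ℝ) : Prop :=
  ∃ j k : ℕ, 1 ≤ j ∧ j ≤ m ∧ 1 ≤ k ∧ k ≤ m ∧ j ≠ k ∧ y = (a j, a k)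

/-- Sum cost of an outcome `y` for the profile `x`. -/
noncomputable def sc (n : ℕ) (y : ℝ × ℝ) (x : Fin n → ℝ) : ℝ :=
  ∑ i, cost y (x i)

lemma mid_abs (u b c t : ℝ) (h1 : u ≤ b) (h2 : b ≤ c) :
    |b - t| ≤ max |u - t| |c - t| := by
  rcases le_total t b with h | h
  · refine le_max_of_le_right ?_
    rw [abs_of_nonneg (sub_nonneg.2 h)]
    exact le_trans (by linarith) (le_abs_self _)
  · refine le_max_of_le_left ?_
    rw [abs_of_nonpos (sub_nonpos.2 h)]
    calc -(b - t) = -(u - t) - (b - u) := by ring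
    _ ≤ -(u - t) := by linarith
    _ ≤ |u - t| := neg_le_abs _

lemma cost_swap (y₁ y₂ t : ℝ) : cost (y₁, y₂) t = cost (y₂, y₁) t := by
  simp [cost, max_comm]

lemma sc_swap (n : ℕ) (y₁ y₂ : ℝ) (x : Fin n → ℝ) :
    sc n (y₁, y₂) x = sc n (y₂, y₁) x := by
  unfold sc; exact Finset.sum_congr rfl fun i _ => cost_swap _ _ _

lemma sc_adj_le (n : ℕ) (u b c : ℝ) (h1 : u ≤ b) (h2 : b ≤ c) (x : Fin n → ℝ) :
    sc n (b, c) x ≤ sc n (u, c) x := by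
  unfold sc
  refine Finset.sum_le_sum fun i _ => ?_
  unfold cost
  exact max_le (mid_abs u b c (x i) h1 h2) (le_max_right _ _)

theorem stmt_3 (n m : ℕ) (hn : 0 < n) (hm : 2 ≤ m) (a : ℕ → ℝ)
    (ha : ∀ j k : ℕ, 1 ≤ j → j ≤ k → k ≤ m → a j ≤ a k)
    (x : Fin n → ℝ) :
    ∃ k : ℕ, 1 ≤ k ∧ k < m ∧
      ∀ y : ℝ × ℝ, Feasible m a y → sc n (a k, a (k + 1)) x ≤ sc n y x := by
  classical
  set s : Finset (ℕ × ℕ) :=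
    (Finset.Icc 1 m ×ˢ Finset.Icc 1 m).filter (fun p => p.1 < p.2) with hs
  have hne : s.Nonempty := by
    refine ⟨(1, 2), ?_⟩
    simp [hs, Finset.mem_filter, Finset.mem_product, hm]
    omega
  obtain ⟨p, hp, hmin⟩ :=
    s.exists_min_image (fun p => sc n (a p.1, a p.2) x) hne
  simp only [hs, Finset.mem_filter, Finset.mem_product, Finset.mem_Icc] at hp
  obtain ⟨⟨⟨hj1, hjm⟩, ⟨hk1, hkm⟩⟩, hjk⟩ := hp
  -- p = (j, k) with 1 ≤ j < k ≤ m ; answer is k - 1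
  have hk2 : 2 ≤ p.2 := by omega
  refine ⟨p.2 - 1, by omega, by omega, ?_⟩
  have hsub : p.2 - 1 + 1 = p.2 := by omega
  rw [hsub]
  have hadj : sc n (a (p.2 - 1), a p.2) x ≤ sc n (a p.1, a p.2) x :=
    sc_adj_le n _ _ _ (ha p.1 (p.2 - 1) hj1 (by omega) (by omega))
      (ha (p.2 - 1) p.2 (by omega) (by omega) hkm) x
  rintro y ⟨j, k, h1j, hjm', h1k, hkm', hjk', rfl⟩
  rcases lt_or_gt_of_ne hjk' with h | h
  · have : (j, k) ∈ s := by
      simp [hs, Finset.mem_filter, Finset.mem_product]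
      omega
    exact le_trans hadj (hmin _ this)
  · have : (k, j) ∈ s := by
      simp [hs, Finset.mem_filter, Finset.mem_product]
      omega
    calc sc n (a (p.2 - 1), a p.2) x ≤ sc n (a k, a j) x :=
          le_trans hadj (hmin _ this)
      _ = sc n (a j, a k) x := sc_swap n _ _ x
end

section
/- Lower bound for the sum cost objective: let n = 2 and let A be the multiset {−1, −1, 1, 1}. For every deterministic strategyproof mechanism f and every δ > 0, there exists a location profile x ∈ ℝ^2 with sc(OPT, x) > 0 and sc(f(x), x) > (3 − δ) · sc(OPT, x), where sc(OPT, x) = min over feasible outcomes y of sc(y, x). Hence no deterministic strategyproof mechanism achieves approximation ratio 3 − δ for any δ > 0 under the sum cost objective. -/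
/-- Feasible outcomes for the alternative multiset `A = {-1, -1, 1, 1}`: each of the
two facilities is placed at a distinct copy, so each coordinate is `-1` or `1`. -/
def Feas (y : ℝ × ℝ) : Prop := (y.1 = -1 ∨ y.1 = 1) ∧ (y.2 = -1 ∨ y.2 = 1)

/-- Sum cost for two agents. -/
noncomputable def sc2 (y : ℝ × ℝ) (x : Fin 2 → ℝ) : ℝ := ∑ i, cost y (x i)

/-!
Fix a small `ε > 0`. At the profile `(ε, -1)` the optimum is `(-1, -1)`, of sum cost `1 + ε`,
while every other feasible outcome puts a facility at `1` and costs at least `3 - ε`; so a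
mechanism with ratio below `3` must choose `(-1, -1)` there. Strategyproofness for the second
agent then forces `(-1, -1)` at `(ε, -ε)` too (reporting `-1` costs it `1 - ε`, any other outcome
at least `1 + ε`), and strategyproofness for the first agent forbids `(1, 1)` at `(1, -ε)`. But
`(1, -ε)` is the mirror image of `(ε, -1)` with the agents swapped: its optimum `(1, 1)` costs
`1 + ε` and everything else at least `3 - ε`. Letting `ε → 0` gives the bound `3`.
-/

lemma cost_diag (a t : ℝ) : cost (a, a) t = |a - t| := max_self _

lemma Feas.one_sub_le_cost {y : ℝ × ℝ} (hy : Feas y) (hne : y ≠ (-1, -1)) (t : ℝ) :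
    1 - t ≤ cost y t := by
  obtain ⟨a, b⟩ := y
  obtain ⟨rfl | rfl, rfl | rfl⟩ := hy
  · exact absurd rfl hne
  · exact le_max_of_le_right (le_abs_self _)
  · exact le_max_of_le_left (le_abs_self _)
  · exact le_max_of_le_left (le_abs_self _)

lemma Feas.one_add_le_cost {y : ℝ × ℝ} (hy : Feas y) (hne : y ≠ (1, 1)) (t : ℝ) :
    1 + t ≤ cost y t := by
  have h : 1 + t ≤ |-1 - t| := by linarith [neg_le_abs (-1 - t)]
  obtain ⟨a, b⟩ := y
  obtain ⟨rfl | rfl, rfl | rfl⟩ := hy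
  · exact le_max_of_le_left h
  · exact le_max_of_le_left h
  · exact le_max_of_le_right h
  · exact absurd rfl hne

lemma sc2_vec (y : ℝ × ℝ) (a b : ℝ) : sc2 y ![a, b] = cost y a + cost y b := by
  simp [sc2]

lemma update_vec_two_zero (a b c : ℝ) : Function.update ![a, b] 0 c = ![c, b] := by
  ext i; fin_cases i <;> rfl

lemma update_vec_two_one (a b c : ℝ) : Function.update ![a, b] 1 c = ![a, c] := by
  ext i; fin_cases i <;> rfl

lemma exists_eps_three_sub_mul_lt {δ : ℝ} (hδ : 0 < δ) :
    ∃ ε : ℝ, 0 < ε ∧ ε ≤ 1 ∧ (3 - δ) * (1 + ε) < 3 - ε := by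
  refine ⟨min δ 1 / 8, by positivity, by linarith [min_le_right δ 1], ?_⟩
  nlinarith [min_le_left δ 1, min_le_right δ 1, lt_min hδ one_pos]

section Profiles

variable {ε : ℝ}

lemma sc2_neg_one_vec_eps_neg_one (hε : 0 ≤ ε) : sc2 (-1, -1) ![ε, -1] = 1 + ε := by
  rw [sc2_vec, cost_diag, cost_diag, abs_of_nonpos (by linarith), sub_self, abs_zero]
  ring

lemma Feas.three_sub_le_sc2_vec_eps_neg_one {y : ℝ × ℝ} (hy : Feas y) (hne : y ≠ (-1, -1)) :
    3 - ε ≤ sc2 y ![ε, -1] := by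
  rw [sc2_vec]
  linarith [hy.one_sub_le_cost hne ε, hy.one_sub_le_cost hne (-1)]

lemma sc2_one_vec_one_neg_eps (hε : 0 ≤ ε) : sc2 (1, 1) ![1, -ε] = 1 + ε := by
  rw [sc2_vec, cost_diag, cost_diag, sub_self, abs_zero, abs_of_nonneg (by linarith)]
  ring

lemma Feas.three_sub_le_sc2_vec_one_neg_eps {y : ℝ × ℝ} (hy : Feas y) (hne : y ≠ (1, 1)) :
    3 - ε ≤ sc2 y ![1, -ε] := by
  rw [sc2_vec]
  linarith [hy.one_add_le_cost hne 1, hy.one_add_le_cost hne (-ε)]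

end Profiles

lemma exists_ratio_gt_of_gap {x : Fin 2 → ℝ} {yo z : ℝ × ℝ} {ε δ : ℝ} (hε : 0 < ε) (hε1 : ε ≤ 1)
    (hεδ : (3 - δ) * (1 + ε) < 3 - ε) (hyo : Feas yo) (hopt : sc2 yo x = 1 + ε)
    (hgap : ∀ y, Feas y → y ≠ yo → 3 - ε ≤ sc2 y x) (hz : Feas z) (hzo : z ≠ yo) :
    ∃ yo : ℝ × ℝ, Feas yo ∧ (∀ y : ℝ × ℝ, Feas y → sc2 yo x ≤ sc2 y x) ∧
      0 < sc2 yo x ∧ (3 - δ) * sc2 yo x < sc2 z x := by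
  refine ⟨yo, hyo, fun y hy ↦ ?_, by linarith,
    by rw [hopt]; linarith [hgap z hz hzo]⟩
  obtain rfl | hne := eq_or_ne y yo
  · exact le_rfl
  · linarith [hgap y hy hne]

section Strategyproof

variable {f : (Fin 2 → ℝ) → ℝ × ℝ} (hfeas : ∀ x : Fin 2 → ℝ, Feas (f x))
  (hsp : ∀ (x : Fin 2 → ℝ) (i : Fin 2) (x' : ℝ),
    cost (f x) (x i) ≤ cost (f (Function.update x i x')) (x i))
  {ε : ℝ} (hε : 0 < ε)

include hfeas hsp hε in
lemma apply_vec_eps_neg_eps_of_apply_vec_eps_neg_one (hleft : f ![ε, -1] = (-1, -1)) :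
    f ![ε, -ε] = (-1, -1) := by
  by_contra hne
  have hdev := hsp ![ε, -ε] 1 (-1)
  rw [update_vec_two_one, hleft, cost_diag] at hdev
  simp only [Matrix.cons_val_one, Matrix.cons_val_zero] at hdev
  have hlow := (hfeas ![ε, -ε]).one_sub_le_cost hne (-ε)
  have hdev_lt : |-1 - -ε| < 1 + ε := abs_lt.mpr ⟨by linarith, by linarith⟩
  linarith

include hsp hε in
lemma apply_vec_one_neg_eps_ne_of_apply_vec_eps_neg_eps (hcenter : f ![ε, -ε] = (-1, -1)) :
    f ![1, -ε] ≠ (1, 1) := by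
  intro hright
  have hdev := hsp ![ε, -ε] 0 1
  rw [update_vec_two_zero, hright, hcenter, cost_diag, cost_diag] at hdev
  simp only [Matrix.cons_val_zero] at hdev
  rw [abs_of_nonpos (by linarith)] at hdev
  have hdev_lt : |1 - ε| < 1 + ε := abs_lt.mpr ⟨by linarith, by linarith⟩
  linarith

end Strategyproof

theorem stmt_5 (f : (Fin 2 → ℝ) → ℝ × ℝ)
    (hfeas : ∀ x : Fin 2 → ℝ, Feas (f x))
    (hsp : ∀ (x : Fin 2 → ℝ) (i : Fin 2) (x' : ℝ),
      cost (f x) (x i) ≤ cost (f (Function.update x i x')) (x i))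
    (δ : ℝ) (hδ : 0 < δ) :
    ∃ x : Fin 2 → ℝ, ∃ yo : ℝ × ℝ, Feas yo ∧
      (∀ y : ℝ × ℝ, Feas y → sc2 yo x ≤ sc2 y x) ∧
      0 < sc2 yo x ∧ (3 - δ) * sc2 yo x < sc2 (f x) x := by
  obtain ⟨ε, hε, hε1, hεδ⟩ := exists_eps_three_sub_mul_lt hδ
  by_cases hleft : f ![ε, -1] = (-1, -1)
  · have hcenter := apply_vec_eps_neg_eps_of_apply_vec_eps_neg_one hfeas hsp hε hleft
    have hright := apply_vec_one_neg_eps_ne_of_apply_vec_eps_neg_eps hsp hε hcenter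
    exact ⟨![1, -ε], exists_ratio_gt_of_gap hε hε1 hεδ ⟨Or.inr rfl, Or.inr rfl⟩
      (sc2_one_vec_one_neg_eps hε.le) (fun _ hy ↦ hy.three_sub_le_sc2_vec_one_neg_eps)
      (hfeas _) hright⟩
  · exact ⟨![ε, -1], exists_ratio_gt_of_gap hε hε1 hεδ ⟨Or.inl rfl, Or.inl rfl⟩
      (sc2_neg_one_vec_eps_neg_one hε.le) (fun _ hy ↦ hy.three_sub_le_sc2_vec_eps_neg_one)
      (hfeas _) hleft⟩
end

section
/- Let cen(x) = (lt(x) + rt(x))/2 where lt(x) = min_i x_i and rt(x) = max_i x_i. If (a_k, a_{k+1}) ∈ AP is a peak of cen(x), then (a_k, a_{k+1}) is an optimal solution under the maximum cost objective: mc((a_k, a_{k+1}), x) ≤ mc(y, x) for every feasible outcome y. -/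
/-- Maximum cost of an outcome `y` for the profile `x` (for `n ≥ 1` this is the
maximum of the agents' costs). -/
noncomputable def mc (n : ℕ) (y : ℝ × ℝ) (x : Fin n → ℝ) : ℝ :=
  ⨆ i, cost y (x i)

/-- Leftmost agent location (for `n ≥ 1`). -/
noncomputable def lt (n : ℕ) (x : Fin n → ℝ) : ℝ := ⨅ i, x i

/-- Rightmost agent location (for `n ≥ 1`). -/
noncomputable def rt (n : ℕ) (x : Fin n → ℝ) : ℝ := ⨆ i, x i

/-!
Since every agent lies in `[lt x, rt x]` and the cost of a point is convex in its location,
the maximum cost of any outcome `y` is attained at `lt x` or `rt x`, and equals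
`cost y (cen x) + (rt x - lt x) / 2`. Hence optimising `mc` means minimising the cost of the
single point `cen x`. Any feasible outcome `(a j, a k)` with `j < k` costs `cen x` at least as
much as the adjacent pair `(a j, a (j + 1))`, because `a (j + 1)` lies between `a j` and `a k`;
so a peak of `cen x` is optimal.
-/

lemma cost_swap_s8 (u v t : ℝ) : cost (u, v) t = cost (v, u) t :=
  max_comm _ _

lemma abs_sub_le_max_of_mem_Icc {u v t : ℝ} (c : ℝ) (hu : u ≤ t) (hv : t ≤ v) :
    |t - c| ≤ max |u - c| |v - c| :=
  abs_le_max_abs_abs (by linarith) (by linarith)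

lemma cost_le_max_of_mem_Icc (y : ℝ × ℝ) {L R t : ℝ} (hL : L ≤ t) (hR : t ≤ R) :
    cost y t ≤ max (cost y L) (cost y R) := by
  have key (u : ℝ) : |u - t| ≤ max |u - L| |u - R| := by
    simpa only [abs_sub_comm u] using abs_sub_le_max_of_mem_Icc u hL hR
  simp only [cost, max_max_max_comm (|y.1 - L|)]
  exact max_le_max (key y.1) (key y.2)

lemma max_abs_sub_eq_abs_sub_midpoint_add {L R : ℝ} (h : L ≤ R) (u : ℝ) :
    max |u - L| |u - R| = |u - (L + R) / 2| + (R - L) / 2 := by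
  rcases le_total u ((L + R) / 2) with hu | hu
  · rw [abs_of_nonpos (by linarith : u - R ≤ 0), abs_of_nonpos (by linarith : u - (L + R) / 2 ≤ 0),
      max_eq_right (abs_le.mpr ⟨by linarith, by linarith⟩)]
    ring
  · rw [abs_of_nonneg (by linarith : 0 ≤ u - L), abs_of_nonneg (by linarith : 0 ≤ u - (L + R) / 2),
      max_eq_left (abs_le.mpr ⟨by linarith, by linarith⟩)]
    ring

lemma max_cost_eq_cost_midpoint_add (y : ℝ × ℝ) {L R : ℝ} (h : L ≤ R) :
    max (cost y L) (cost y R) = cost y ((L + R) / 2) + (R - L) / 2 := by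
  simp only [cost, max_max_max_comm (|y.1 - L|), max_abs_sub_eq_abs_sub_midpoint_add h,
    max_add_add_right]

section Extremes

variable {n : ℕ} (x : Fin n → ℝ)

lemma lt_le_apply (i : Fin n) : lt n x ≤ x i :=
  ciInf_le (Set.finite_range x).bddBelow i

lemma apply_le_rt (i : Fin n) : x i ≤ rt n x :=
  le_ciSup (Set.finite_range x).bddAbove i

lemma exists_apply_eq_lt (hn : 0 < n) : ∃ i, x i = lt n x :=
  have : Nonempty (Fin n) := ⟨⟨0, hn⟩⟩
  exists_eq_ciInf_of_finite

lemma exists_apply_eq_rt (hn : 0 < n) : ∃ i, x i = rt n x :=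
  have : Nonempty (Fin n) := ⟨⟨0, hn⟩⟩
  exists_eq_ciSup_of_finite

lemma lt_le_rt (hn : 0 < n) : lt n x ≤ rt n x :=
  (lt_le_apply x ⟨0, hn⟩).trans (apply_le_rt x ⟨0, hn⟩)

lemma mc_eq_max_cost_lt_rt (hn : 0 < n) (y : ℝ × ℝ) :
    mc n y x = max (cost y (lt n x)) (cost y (rt n x)) := by
  have : Nonempty (Fin n) := ⟨⟨0, hn⟩⟩
  have bdd : BddAbove (Set.range fun i => cost y (x i)) := (Set.finite_range _).bddAbove
  obtain ⟨iL, hiL⟩ := exists_apply_eq_lt x hn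
  obtain ⟨iR, hiR⟩ := exists_apply_eq_rt x hn
  refine le_antisymm (ciSup_le fun i => ?_) (max_le ?_ ?_)
  · exact cost_le_max_of_mem_Icc y (lt_le_apply x i) (apply_le_rt x i)
  · exact hiL ▸ le_ciSup bdd iL
  · exact hiR ▸ le_ciSup bdd iR

lemma mc_eq_cost_cen_add (hn : 0 < n) (y : ℝ × ℝ) :
    mc n y x = cost y ((lt n x + rt n x) / 2) + (rt n x - lt n x) / 2 := by
  rw [mc_eq_max_cost_lt_rt x hn, max_cost_eq_cost_midpoint_add y (lt_le_rt x hn)]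

end Extremes

lemma cost_le_cost_of_mem_Icc {u w v : ℝ} (h₁ : u ≤ w) (h₂ : w ≤ v) (c : ℝ) :
    cost (u, w) c ≤ cost (u, v) c :=
  max_le (le_max_left _ _) (abs_sub_le_max_of_mem_Icc c h₁ h₂)

lemma exists_adjacent_cost_le_of_feasible {m : ℕ} {a : ℕ → ℝ}
    (ha : ∀ j k : ℕ, 1 ≤ j → j ≤ k → k ≤ m → a j ≤ a k) {y : ℝ × ℝ} (hy : Feasible m a y)
    (c : ℝ) : ∃ j, 1 ≤ j ∧ j < m ∧ cost (a j, a (j + 1)) c ≤ cost y c := by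
  obtain ⟨j, k, hj1, hjm, hk1, hkm, hjk, rfl⟩ := hy
  rcases hjk.lt_or_gt with h | h
  · refine ⟨j, hj1, h.trans_le hkm, cost_le_cost_of_mem_Icc ?_ ?_ c⟩
    · exact ha j (j + 1) hj1 j.le_succ (h.trans_le hkm)
    · exact ha (j + 1) k (by omega) h hkm
  · refine ⟨k, hk1, h.trans_le hjm, ?_⟩
    rw [cost_swap_s8 (a j)]
    refine cost_le_cost_of_mem_Icc ?_ ?_ c
    · exact ha k (k + 1) hk1 k.le_succ (h.trans_le hjm)
    · exact ha (k + 1) j (by omega) h hjm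

theorem stmt_8_general (n m : ℕ) (hn : 0 < n) (a : ℕ → ℝ)
    (ha : ∀ j k : ℕ, 1 ≤ j → j ≤ k → k ≤ m → a j ≤ a k)
    (x : Fin n → ℝ) (k : ℕ)
    -- `(a k, a (k+1))` is a peak of `cen x = (lt x + rt x) / 2`
    (hpeak : ∀ j : ℕ, 1 ≤ j → j < m →
      cost (a k, a (k + 1)) ((lt n x + rt n x) / 2) ≤
        cost (a j, a (j + 1)) ((lt n x + rt n x) / 2)) :
    ∀ y : ℝ × ℝ, Feasible m a y → mc n (a k, a (k + 1)) x ≤ mc n y x := by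
  intro y hy
  obtain ⟨j, hj1, hjm, hj⟩ := exists_adjacent_cost_le_of_feasible ha hy ((lt n x + rt n x) / 2)
  rw [mc_eq_cost_cen_add x hn, mc_eq_cost_cen_add x hn]
  gcongr
  exact (hpeak j hj1 hjm).trans hj

theorem stmt_8 (n m : ℕ) (hn : 0 < n) (hm : 2 ≤ m) (a : ℕ → ℝ)
    (ha : ∀ j k : ℕ, 1 ≤ j → j ≤ k → k ≤ m → a j ≤ a k)
    (x : Fin n → ℝ) (k : ℕ) (hk1 : 1 ≤ k) (hk2 : k < m)
    -- `(a k, a (k+1))` is a peak of `cen x = (lt x + rt x) / 2`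
    (hpeak : ∀ j : ℕ, 1 ≤ j → j < m →
      cost (a k, a (k + 1)) ((lt n x + rt n x) / 2) ≤
        cost (a j, a (j + 1)) ((lt n x + rt n x) / 2)) :
    ∀ y : ℝ × ℝ, Feasible m a y → mc n (a k, a (k + 1)) x ≤ mc n y x :=
  stmt_8_general n m hn a ha x k hpeak
end

section
/- Lower bound for the maximum cost objective: let n = 2 and let A be the multiset {−1, −1, 1, 1}. For every deterministic strategyproof mechanism f and every δ > 0, there exists a location profile x ∈ ℝ^2 with mc(OPT, x) > 0 and mc(f(x), x) > (3 − δ) · mc(OPT, x), where mc(OPT, x) = min over feasible outcomes y of mc(y, x). Hence no deterministic strategyproof mechanism achieves approximation ratio 3 − δ for any δ > 0 under the maximum cost objective. -/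
/-- Maximum cost for two agents. -/
noncomputable def mc2 (y : ℝ × ℝ) (x : Fin 2 → ℝ) : ℝ :=
  max (cost y (x 0)) (cost y (x 1))

def IsStrategyproof (f : (Fin 2 → ℝ) → ℝ × ℝ) : Prop :=
  ∀ (x : Fin 2 → ℝ) (i : Fin 2) (x' : ℝ),
    cost (f x) (x i) ≤ cost (f (Function.update x i x')) (x i)

lemma cost_neg_one_neg_one (t : ℝ) : cost (-1, -1) t = |1 + t| := by
  rw [cost, max_self, ← abs_neg]
  congr 1
  ring

lemma cost_one_one (t : ℝ) : cost (1, 1) t = |1 - t| :=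
  max_self _

section Profiles

variable {ε : ℝ}

lemma mc2_neg_one_neg_one (hε : 0 ≤ ε) : mc2 (-1, -1) ![ε, -2] = 1 + ε := by
  simp only [mc2, cost_neg_one_neg_one, Matrix.cons_val_zero, Matrix.cons_val_one]
  rw [abs_of_nonneg (by linarith : (0 : ℝ) ≤ 1 + ε), show |(1 : ℝ) + -2| = 1 by norm_num]
  exact max_eq_left (by linarith)

lemma mc2_one_one (hε : 0 ≤ ε) : mc2 (1, 1) ![2, -ε] = 1 + ε := by
  simp only [mc2, cost_one_one, Matrix.cons_val_zero, Matrix.cons_val_one]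
  rw [sub_neg_eq_add, abs_of_nonneg (by linarith : (0 : ℝ) ≤ 1 + ε),
    show |(1 : ℝ) - 2| = 1 by norm_num]
  exact max_eq_right (by linarith)

lemma three_le_mc2_of_ne_neg_one {y : ℝ × ℝ} (hy : Feas y) (hne : y ≠ (-1, -1)) :
    3 ≤ mc2 y ![ε, -2] :=
  calc (3 : ℝ) = 1 - (-2) := by norm_num
    _ ≤ cost y (-2) := hy.one_sub_le_cost hne _
    _ ≤ mc2 y ![ε, -2] := le_max_right _ _

lemma three_le_mc2_of_ne_one {y : ℝ × ℝ} (hy : Feas y) (hne : y ≠ (1, 1)) :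
    3 ≤ mc2 y ![2, -ε] :=
  calc (3 : ℝ) = 1 + 2 := by norm_num
    _ ≤ cost y 2 := hy.one_add_le_cost hne _
    _ ≤ mc2 y ![2, -ε] := le_max_left _ _

end Profiles

lemma optimal_and_ratio_lt_of_gap {x : Fin 2 → ℝ} {yo z : ℝ × ℝ} {c δ : ℝ} (hyo : Feas yo)
    (hmc : mc2 yo x = c) (hc : 0 < c) (hc3 : c ≤ 3)
    (hgap : ∀ y, Feas y → y ≠ yo → 3 ≤ mc2 y x) (hz : Feas z) (hzo : z ≠ yo)
    (hδ : (3 - δ) * c < 3) :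
    Feas yo ∧ (∀ y : ℝ × ℝ, Feas y → mc2 yo x ≤ mc2 y x) ∧
      0 < mc2 yo x ∧ (3 - δ) * mc2 yo x < mc2 z x := by
  refine ⟨hyo, fun y hy => ?_, hmc ▸ hc, hmc ▸ hδ.trans_le (hgap z hz hzo)⟩
  by_cases hy' : y = yo
  · rw [hy']
  · exact hmc ▸ hc3.trans (hgap y hy hy')

section Strategyproof

variable {f : (Fin 2 → ℝ) → ℝ × ℝ} {ε : ℝ}

lemma eq_neg_one_of_strategyproof (hfeas : ∀ x, Feas (f x)) (hsp : IsStrategyproof f)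
    (hε : 0 < ε) (h : f ![ε, -2] = (-1, -1)) : f ![ε, -ε] = (-1, -1) := by
  by_contra hne
  have hdev := hsp ![ε, -ε] 1 (-2)
  have hupd : Function.update ![ε, -ε] 1 (-2) = ![ε, -2] := by
    funext i; fin_cases i <;> simp
  simp only [hupd, h, cost_neg_one_neg_one, Matrix.cons_val_one, Matrix.cons_val_zero] at hdev
  have hlow := (hfeas ![ε, -ε]).one_sub_le_cost hne (-ε)
  have : |1 + -ε| < 1 - -ε := by
    rw [abs_lt]; constructor <;> linarith
  linarith

lemma eq_one_of_strategyproof (hfeas : ∀ x, Feas (f x)) (hsp : IsStrategyproof f)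
    (hε : 0 < ε) (h : f ![2, -ε] = (1, 1)) : f ![ε, -ε] = (1, 1) := by
  by_contra hne
  have hdev := hsp ![ε, -ε] 0 2
  have hupd : Function.update ![ε, -ε] 0 2 = ![2, -ε] := by
    funext i; fin_cases i <;> simp
  simp only [hupd, h, cost_one_one, Matrix.cons_val_zero] at hdev
  have hlow := (hfeas ![ε, -ε]).one_add_le_cost hne ε
  have : |1 - ε| < 1 + ε := by
    rw [abs_lt]; constructor <;> linarith
  linarith

end Strategyproof

theorem stmt_10 (f : (Fin 2 → ℝ) → ℝ × ℝ)
    (hfeas : ∀ x : Fin 2 → ℝ, Feas (f x))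
    (hsp : ∀ (x : Fin 2 → ℝ) (i : Fin 2) (x' : ℝ),
      cost (f x) (x i) ≤ cost (f (Function.update x i x')) (x i))
    (δ : ℝ) (hδ : 0 < δ) :
    ∃ x : Fin 2 → ℝ, ∃ yo : ℝ × ℝ, Feas yo ∧
      (∀ y : ℝ × ℝ, Feas y → mc2 yo x ≤ mc2 y x) ∧
      0 < mc2 yo x ∧ (3 - δ) * mc2 yo x < mc2 (f x) x := by
  set ε := δ / (3 + δ) with hε_def
  have hε : 0 < ε := by positivity
  have hε1 : ε < 1 := (div_lt_one (by linarith)).2 (by linarith)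
  have hratio : (3 - δ) * (1 + ε) < 3 := by
    have : (3 - δ) * (1 + ε) = 3 - 2 * δ ^ 2 / (3 + δ) := by
      rw [hε_def]
      field_simp
      ring
    rw [this]
    linarith [show 0 < 2 * δ ^ 2 / (3 + δ) by positivity]
  by_cases hneg : f ![ε, -2] = (-1, -1)
  · by_cases hpos : f ![2, -ε] = (1, 1)
    · have := (eq_neg_one_of_strategyproof hfeas hsp hε hneg).symm.trans
        (eq_one_of_strategyproof hfeas hsp hε hpos)
      norm_num [Prod.ext_iff] at this
    · exact ⟨_, _, optimal_and_ratio_lt_of_gap ⟨Or.inr rfl, Or.inr rfl⟩ (mc2_one_one hε.le)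
        (by linarith) (by linarith) (fun _ => three_le_mc2_of_ne_one) (hfeas _) hpos hratio⟩
  · exact ⟨_, _, optimal_and_ratio_lt_of_gap ⟨Or.inl rfl, Or.inl rfl⟩ (mc2_neg_one_neg_one hε.le)
      (by linarith) (by linarith) (fun _ => three_le_mc2_of_ne_neg_one) (hfeas _) hneg hratio⟩
end

section
/- Mechanism 2 is 3-approximate for the maximum cost: let lt(x) = min_i x_i and let f(x) be any peak of lt(x) in AP. Then for every location profile x ∈ ℝ^n, mc(f(x), x) ≤ 3 · mc(y, x) for every feasible outcome y; i.e., mc(f(x), x) ≤ 3 · mc(OPT, x), where mc(OPT, x) is the minimum maximum cost over all feasible outcomes. -/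
/-- `y` is an adjacent alternative pair `(a k, a (k+1))` minimizing the Max-variant
cost at `t` among all adjacent pairs (indices are 1-based, `1 ≤ k ≤ m - 1`). -/
def IsPeak (m : ℕ) (a : ℕ → ℝ) (y : ℝ × ℝ) (t : ℝ) : Prop :=
  ∃ k : ℕ, 1 ≤ k ∧ k < m ∧ y = (a k, a (k + 1)) ∧
    ∀ j : ℕ, 1 ≤ j → j < m → cost (a k, a (k + 1)) t ≤ cost (a j, a (j + 1)) t

theorem stmt_12 (n m : ℕ) (hn : 0 < n) (hm : 2 ≤ m) (a : ℕ → ℝ)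
    (ha : ∀ j k : ℕ, 1 ≤ j → j ≤ k → k ≤ m → a j ≤ a k)
    (f : (Fin n → ℝ) → ℝ × ℝ)
    (hf : ∀ x : Fin n → ℝ, IsPeak m a (f x) (lt n x))
    (x : Fin n → ℝ) :
    ∀ y : ℝ × ℝ, Feasible m a y → mc n (f x) x ≤ 3 * mc n y x := by
  have abs_between : ∀ u r v t : ℝ, u ≤ r → r ≤ v → |r - t| ≤ max |u - t| |v - t| := by
    intro u r v t h1 h2
    rcases le_total t r with h | h
    · have hv : v - t ≤ |v - t| := le_abs_self _
      have : |r - t| = r - t := abs_of_nonneg (by linarith)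
      rw [this]
      exact le_max_of_le_right (by linarith)
    · have hu : t - u ≤ |u - t| := by rw [abs_sub_comm]; exact le_abs_self _
      have : |r - t| = t - r := by rw [abs_sub_comm]; exact abs_of_nonneg (by linarith)
      rw [this]
      exact le_max_of_le_left (by linarith)
  intro y hy
  haveI : Nonempty (Fin n) := ⟨⟨0, hn⟩⟩
  obtain ⟨i0, hi0⟩ := Finite.exists_min x
  have hbdd : BddBelow (Set.range x) := (Set.finite_range x).bddBelow
  have ht : lt n x = x i0 := le_antisymm (ciInf_le hbdd i0) (le_ciInf hi0)
  obtain ⟨k, hk1, hkm, hfx, hmin⟩ := hf x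
  obtain ⟨j, l, hj1, hjm, hl1, hlm, hjl, hy'⟩ := hy
  have key : ∀ j l : ℕ, 1 ≤ j → j < l → l ≤ m →
      cost (f x) (lt n x) ≤ cost (a j, a l) (lt n x) := by
    intro j l hj1 hjl hlm
    have h1 : cost (f x) (lt n x) ≤ cost (a j, a (j + 1)) (lt n x) := by
      rw [hfx]; exact hmin j hj1 (by omega)
    refine h1.trans ?_
    have hjj : a j ≤ a (j + 1) := ha j (j + 1) hj1 (by omega) (by omega)
    have hmono : a (j + 1) ≤ a l := ha (j + 1) l (by omega) (by omega) hlm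
    unfold cost
    exact max_le (le_max_left _ _) (abs_between _ _ _ _ hjj hmono)
  have hcle : cost (f x) (lt n x) ≤ cost y (lt n x) := by
    rcases lt_or_gt_of_ne hjl with h | h
    · rw [hy']; exact key j l hj1 h hlm
    · have h2 := key l j hl1 h hjm
      have hsw : cost (a l, a j) (lt n x) = cost (a j, a l) (lt n x) := by
        unfold cost; exact max_comm _ _
      rw [hy']; rw [hsw] at h2; exact h2
  have hbA : BddAbove (Set.range fun i => cost y (x i)) := (Set.finite_range _).bddAbove
  have hmc_t : cost y (lt n x) ≤ mc n y x := by
    rw [ht]; exact le_ciSup hbA i0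
  unfold mc
  refine ciSup_le fun i => ?_
  have h1 : cost (f x) (x i) ≤ cost (f x) (lt n x) + |x i - lt n x| := by
    unfold cost
    have e1 : |(f x).1 - x i| ≤ max |(f x).1 - lt n x| |(f x).2 - lt n x| + |x i - lt n x| :=
      calc |(f x).1 - x i| ≤ |(f x).1 - lt n x| + |lt n x - x i| := abs_sub_le _ _ _
        _ ≤ _ := by rw [abs_sub_comm (lt n x)]; gcongr; exact le_max_left _ _
    have e2 : |(f x).2 - x i| ≤ max |(f x).1 - lt n x| |(f x).2 - lt n x| + |x i - lt n x| :=
      calc |(f x).2 - x i| ≤ |(f x).2 - lt n x| + |lt n x - x i| := abs_sub_le _ _ _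
        _ ≤ _ := by rw [abs_sub_comm (lt n x)]; gcongr; exact le_max_right _ _
    exact max_le e1 e2
  have h2 : |x i - lt n x| ≤ cost y (x i) + cost y (lt n x) := by
    calc |x i - lt n x| ≤ |x i - y.1| + |y.1 - lt n x| := abs_sub_le _ _ _
      _ ≤ cost y (x i) + cost y (lt n x) := by
          unfold cost
          gcongr
          · rw [abs_sub_comm]; exact le_max_left _ _
          · exact le_max_left _ _
  have h3 : cost y (x i) ≤ mc n y x := le_ciSup hbA i
  have : mc n y x = ⨆ i, cost y (x i) := rfl
  linarith
end

section
/- SC-Mechanism (single facility): let med(x) denote the ⌈n/2⌉-th smallest coordinate of x, and let f be a mechanism such that there is a function g : ℝ → A with g(t) ∈ argmin_{a∈A} |a − t| for every t, and f(x) = g(med(x)). Then (i) f is group strategyproof: for every x, every nonempty S ⊆ {1,…,n} and every deviation x_S', there exists i ∈ S with |f(x) − x_i| ≤ |f(x_S', x_{−S}) − x_i|; and (ii) f is 3-approximate for the sum cost: Σ_i |f(x) − x_i| ≤ 3 · min_{a∈A} Σ_i |a − x_i| for every x. -/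
/-!
Group strategyproofness: if every member of a coalition strictly prefers the new outcome `g m'`
to `g m`, they all report on the far side of the midpoint of `g m` and `g m'`, while `m` itself
lies on the near side. Moving such reports cannot push the order statistic `m` towards `m'`, and
`m'` cannot cross the midpoint, so `m = m'`.

Approximation: the median `m` minimises `∑ |t - xᵢ|`, and `|f x - m| ≤ |b - m|` for every
alternative `b`; the triangle inequality gives `|f x - xᵢ| ≤ |b - xᵢ| + 2 |m - xᵢ|`, and summing
yields the factor `3`.
-/

open Finset

section OrderStat

variable {α : Type*} [LinearOrder α] {n : ℕ}

/-- The `k`-th smallest coordinate of `x`, counting from `0`. -/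
def orderStat (x : Fin n → α) (k : Fin n) : α :=
  x (Tuple.sort x k)

variable (x : Fin n → α) (k : Fin n) (a : α)

lemma card_filter_comp_sort (p : α → Prop) [DecidablePred p] :
    #{i | p (x (Tuple.sort x i))} = #{i | p (x i)} :=
  card_equiv (Tuple.sort x) (by simp)

lemma orderStat_le_iff : orderStat x k ≤ a ↔ (k : ℕ) < #{i | x i ≤ a} := by
  rw [← card_filter_comp_sort x (· ≤ a)]
  exact (Tuple.lt_card_le_iff_apply_le_of_monotone (Tuple.monotone_sort x)).symm

lemma orderStat_lt_iff : orderStat x k < a ↔ (k : ℕ) < #{i | x i < a} := by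
  rw [← card_filter_comp_sort x (· < a)]
  exact (Tuple.lt_card_lt_iff_apply_lt_of_monotone (Tuple.monotone_sort x)).symm

lemma le_orderStat_iff : a ≤ orderStat x k ↔ n ≤ k + #{i | a ≤ x i} := by
  have hsplit := card_filter_add_card_filter_not (s := univ) (fun i => x i < a)
  simp only [not_lt, card_univ, Fintype.card_fin] at hsplit
  rw [← not_lt, orderStat_lt_iff]
  omega

variable {x} (y : Fin n → α)

lemma orderStat_le_orderStat_of_forall_ge (h : ∀ i, orderStat x k ≤ x i → x i ≤ y i) :
    orderStat x k ≤ orderStat y k := by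
  refine (le_orderStat_iff y k _).2 ((le_orderStat_iff x k _).1 le_rfl |>.trans ?_)
  refine Nat.add_le_add_left (card_le_card fun i => ?_) _
  simpa using fun hi => hi.trans (h i hi)

lemma orderStat_le_orderStat_of_forall_le (h : ∀ i, x i ≤ orderStat x k → y i ≤ x i) :
    orderStat y k ≤ orderStat x k := by
  refine (orderStat_le_iff y k _).2 ((orderStat_le_iff x k _).1 le_rfl |>.trans_le ?_)
  exact card_le_card fun i => by simpa using fun hi => (h i hi).trans hi

end OrderStat

section Median

variable {ι : Type*} (s : Finset ι) (x : ι → ℝ) {m : ℝ}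

lemma sum_abs_sub_le_of_le (hm : #s ≤ 2 * #{i ∈ s | x i ≤ m}) {b : ℝ} (hmb : m ≤ b) :
    ∑ i ∈ s, |m - x i| ≤ ∑ i ∈ s, |b - x i| := by
  have hstep : ∀ i ∈ s, |m - x i| + (b - m) * (if x i ≤ m then 1 else -1) ≤ |b - x i| := by
    intro i _
    split_ifs with hi
    · rw [abs_of_nonneg (by linarith), abs_of_nonneg (by linarith)]
      linarith
    · linarith [abs_sub_le m b (x i), abs_of_nonpos (sub_nonpos.2 hmb), abs_sub_comm m b]
  have hsign : 0 ≤ ∑ i ∈ s, (if x i ≤ m then (1 : ℝ) else -1) := by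
    have hsplit := card_filter_add_card_filter_not (s := s) (fun i => x i ≤ m)
    have hle : #{i ∈ s | ¬x i ≤ m} ≤ #{i ∈ s | x i ≤ m} := by omega
    rw [sum_ite, sum_const, sum_const, nsmul_one, smul_neg, nsmul_one, ← sub_eq_add_neg,
      sub_nonneg]
    exact_mod_cast hle
  calc ∑ i ∈ s, |m - x i|
      ≤ ∑ i ∈ s, |m - x i| + (b - m) * ∑ i ∈ s, (if x i ≤ m then (1 : ℝ) else -1) :=
        le_add_of_nonneg_right (mul_nonneg (sub_nonneg.2 hmb) hsign)
    _ = ∑ i ∈ s, (|m - x i| + (b - m) * (if x i ≤ m then 1 else -1)) := by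
        rw [mul_sum, sum_add_distrib]
    _ ≤ ∑ i ∈ s, |b - x i| := sum_le_sum hstep

lemma sum_abs_sub_le_of_isMedian (h₁ : #s ≤ 2 * #{i ∈ s | x i ≤ m})
    (h₂ : #s ≤ 2 * #{i ∈ s | m ≤ x i}) (b : ℝ) :
    ∑ i ∈ s, |m - x i| ≤ ∑ i ∈ s, |b - x i| := by
  rcases le_total m b with hmb | hbm
  · exact sum_abs_sub_le_of_le s x h₁ hmb
  · -- reflect `x ↦ -x`, which exchanges the two halves of the data
    have h₂' : #s ≤ 2 * #{i ∈ s | -x i ≤ -m} := by simpa only [neg_le_neg_iff] using h₂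
    simpa only [Pi.neg_apply, neg_sub_neg, abs_sub_comm (x _)] using
      sum_abs_sub_le_of_le s (-x) h₂' (neg_le_neg hbm)

end Median

lemma sum_abs_sub_orderStat_le {n : ℕ} (x : Fin n → ℝ) {k : Fin n} (hk₁ : 2 * k ≤ n)
    (hk₂ : n ≤ 2 * k + 2) (b : ℝ) :
    ∑ i, |orderStat x k - x i| ≤ ∑ i, |b - x i| := by
  have hle := (orderStat_le_iff x k _).1 le_rfl
  have hge := (le_orderStat_iff x k _).1 le_rfl
  refine sum_abs_sub_le_of_isMedian univ x ?_ ?_ b <;>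
    simp only [card_univ, Fintype.card_fin] <;> omega

lemma sum_dist_le_three_mul {E ι : Type*} [PseudoMetricSpace E] (s : Finset ι) (x : ι → E)
    {a b m : E} (hm : ∑ i ∈ s, dist m (x i) ≤ ∑ i ∈ s, dist b (x i))
    (ha : dist a m ≤ dist b m) :
    ∑ i ∈ s, dist a (x i) ≤ 3 * ∑ i ∈ s, dist b (x i) := by
  have hpt : ∀ i ∈ s, dist a (x i) ≤ dist b (x i) + 2 * dist m (x i) := fun i _ => by
    linarith [dist_triangle a m (x i), dist_triangle b (x i) m, dist_comm (x i) m]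
  calc ∑ i ∈ s, dist a (x i)
      ≤ ∑ i ∈ s, (dist b (x i) + 2 * dist m (x i)) := sum_le_sum hpt
    _ = ∑ i ∈ s, dist b (x i) + 2 * ∑ i ∈ s, dist m (x i) := by rw [sum_add_distrib, mul_sum]
    _ ≤ 3 * ∑ i ∈ s, dist b (x i) := by linarith

lemma abs_sub_le_abs_sub_iff_of_lt {a b : ℝ} (hba : b < a) (t : ℝ) :
    |a - t| ≤ |b - t| ↔ a + b ≤ 2 * t := by
  rw [← sq_le_sq]
  constructor <;> intro h <;> nlinarith

lemma abs_sub_le_abs_sub_iff_of_gt {a b : ℝ} (hba : b < a) (t : ℝ) :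
    |b - t| ≤ |a - t| ↔ 2 * t ≤ a + b := by
  rw [← sq_le_sq]
  constructor <;> intro h <;> nlinarith

lemma exists_mem_abs_sub_le_of_orderStat {n : ℕ} {g : ℝ → ℝ}
    (hg : ∀ s t, |g s - s| ≤ |g t - s|) (k : Fin n) {x y : Fin n → ℝ} {S : Finset (Fin n)}
    (hS : S.Nonempty) (hy : ∀ i ∉ S, y i = x i) :
    ∃ i ∈ S, |g (orderStat x k) - x i| ≤ |g (orderStat y k) - x i| := by
  set m := orderStat x k
  set m' := orderStat y k
  by_contra! hbetter
  obtain ⟨i₀, hi₀⟩ := hS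
  have hne : g m' ≠ g m := fun h => (hbetter i₀ hi₀).ne (by rw [h])
  suffices m = m' from hne (congrArg g this).symm
  rcases hne.lt_or_gt with hlt | hgt
  · have hS : ∀ i ∈ S, 2 * x i < g m + g m' := fun i hi =>
      (lt_iff_lt_of_le_iff_le (abs_sub_le_abs_sub_iff_of_lt hlt (x i))).1 (hbetter i hi)
    have hm : g m + g m' ≤ 2 * m := (abs_sub_le_abs_sub_iff_of_lt hlt m).1 (hg m m')
    have hm' : 2 * m' ≤ g m + g m' := (abs_sub_le_abs_sub_iff_of_gt hlt m').1 (hg m' m)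
    have : m ≤ m' := orderStat_le_orderStat_of_forall_ge k y fun i hi => by
      rw [hy i fun hiS => by linarith [hS i hiS]]
    linarith
  · have hS : ∀ i ∈ S, g m' + g m < 2 * x i := fun i hi =>
      (lt_iff_lt_of_le_iff_le (abs_sub_le_abs_sub_iff_of_gt hgt (x i))).1 (hbetter i hi)
    have hm : 2 * m ≤ g m' + g m := (abs_sub_le_abs_sub_iff_of_gt hgt m).1 (hg m m')
    have hm' : g m' + g m ≤ 2 * m' := (abs_sub_le_abs_sub_iff_of_lt hgt m').1 (hg m' m)
    have : m' ≤ m := orderStat_le_orderStat_of_forall_le k y fun i hi => by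
      rw [hy i fun hiS => by linarith [hS i hiS]]
    linarith

theorem stmt_13 (n : ℕ) (hn : 0 < n) (A : Finset ℝ)
    (g : ℝ → ℝ)
    -- `g t` is a closest alternative to `t`
    (hg : ∀ t : ℝ, g t ∈ A ∧ ∀ b ∈ A, |g t - t| ≤ |b - t|)
    (f : (Fin n → ℝ) → ℝ)
    -- `f x = g (med x)`, where `med x` is the `⌈n/2⌉`-th smallest coordinate of `x`
    (hf : ∀ x : Fin n → ℝ, f x = g (x (Tuple.sort x ⟨(n - 1) / 2, by omega⟩))) :
    -- (i) group strategyproofness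
    (∀ (x : Fin n → ℝ) (S : Finset (Fin n)), S.Nonempty → ∀ x' : Fin n → ℝ,
      ∃ i ∈ S, |f x - x i| ≤ |f (fun k => if k ∈ S then x' k else x k) - x i|) ∧
    -- (ii) 3-approximation for the sum cost
    (∀ x : Fin n → ℝ, ∀ b ∈ A, (∑ i, |f x - x i|) ≤ 3 * ∑ i, |b - x i|) := by
  set k : Fin n := ⟨(n - 1) / 2, by omega⟩
  have hk : (k : ℕ) = (n - 1) / 2 := rfl
  have hf' : ∀ x, f x = g (orderStat x k) := hf
  refine ⟨fun x S hS x' => ?_, fun x b hb => ?_⟩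
  · simp only [hf']
    exact exists_mem_abs_sub_le_of_orderStat (fun s t => (hg s).2 _ (hg t).1) k hS
      fun i hi => if_neg hi
  · have hmed := sum_abs_sub_orderStat_le x (k := k) (by omega) (by omega) b
    have hnear : dist (f x) (orderStat x k) ≤ dist b (orderStat x k) := by
      simpa only [hf', Real.dist_eq] using (hg _).2 b hb
    simp only [← Real.dist_eq] at hmed ⊢
    exact sum_dist_le_three_mul univ x hmed hnear
end

section
/- MC-Mechanism (single facility): let lt(x) = min_i x_i, and let f be a mechanism such that there is a function g : ℝ → A with g(t) ∈ argmin_{a∈A} |a − t| for every t, and f(x) = g(lt(x)). Then (i) f is group strategyproof: for every x, every nonempty S ⊆ {1,…,n} and every deviation x_S', there exists i ∈ S with |f(x) − x_i| ≤ |f(x_S', x_{−S}) − x_i|; and (ii) f is 3-approximate for the maximum cost: max_i |f(x) − x_i| ≤ 3 · min_{a∈A} max_i |a − x_i| for every x. -/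
theorem stmt_14 (n : ℕ) (hn : 0 < n) (A : Finset ℝ) (hA : A.Nonempty)
    (g : ℝ → ℝ)
    -- `g t` is a closest alternative to `t`
    (hg : ∀ t : ℝ, g t ∈ A ∧ ∀ b ∈ A, |g t - t| ≤ |b - t|)
    (f : (Fin n → ℝ) → ℝ)
    (hf : ∀ x : Fin n → ℝ, f x = g (lt n x)) :
    -- (i) group strategyproofness
    (∀ (x : Fin n → ℝ) (S : Finset (Fin n)), S.Nonempty → ∀ x' : Fin n → ℝ,
      ∃ i ∈ S, |f x - x i| ≤ |f (fun k => if k ∈ S then x' k else x k) - x i|) ∧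
    -- (ii) 3-approximation for the maximum cost
    (∀ x : Fin n → ℝ, ∀ b ∈ A, (⨆ i, |f x - x i|) ≤ 3 * ⨆ i, |b - x i|) := by
  haveI : Nonempty (Fin n) := Fin.pos_iff_nonempty.mp hn
  -- key monotonicity-type lemma
  have key : ∀ m' m t : ℝ, m' < m → m ≤ t → |g m - t| ≤ |g m' - t| := by
    intro m' m t h1 h2
    obtain ⟨hgm, hopt⟩ := hg m
    obtain ⟨hgm', hopt'⟩ := hg m'
    have e1 : |g m - m| ≤ |g m' - m| := hopt _ hgm'
    have e2 : |g m' - m'| ≤ |g m - m'| := hopt' _ hgm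
    rcases abs_cases (g m - m) with ⟨q1, _⟩ | ⟨q1, _⟩ <;>
    rcases abs_cases (g m' - m) with ⟨q2, _⟩ | ⟨q2, _⟩ <;>
    rcases abs_cases (g m' - m') with ⟨q3, _⟩ | ⟨q3, _⟩ <;>
    rcases abs_cases (g m - m') with ⟨q4, _⟩ | ⟨q4, _⟩ <;>
    rcases abs_cases (g m - t) with ⟨q5, _⟩ | ⟨q5, _⟩ <;>
    rcases abs_cases (g m' - t) with ⟨q6, _⟩ | ⟨q6, _⟩ <;>
    rw [q1, q2] at e1 <;> rw [q3, q4] at e2 <;> rw [q5, q6] <;> linarith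
  have hlow : ∀ (x : Fin n → ℝ) (i : Fin n), lt n x ≤ x i := by
    intro x i
    exact ciInf_le (Finite.bddBelow_range x) i
  have hmin : ∀ x : Fin n → ℝ, ∃ i₀ : Fin n, lt n x = x i₀ := by
    intro x
    obtain ⟨i₀, hi₀⟩ := Finite.exists_min x
    exact ⟨i₀, le_antisymm (hlow x i₀) (le_ciInf hi₀)⟩
  constructor
  · -- group strategyproofness
    intro x S hS x'
    set x'' : Fin n → ℝ := fun k => if k ∈ S then x' k else x k with hx''
    obtain ⟨i₀, hi₀⟩ := hmin x
    by_cases hiS : i₀ ∈ S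
    · refine ⟨i₀, hiS, ?_⟩
      rw [hf, hf, ← hi₀]
      exact (hg (lt n x)).2 _ (hg (lt n x'')).1
    · have hle : lt n x'' ≤ lt n x := by
        have := hlow x'' i₀
        simpa [hx'', hiS, ← hi₀] using this
      rcases lt_or_eq_of_le hle with hlt | heq
      · obtain ⟨j, hj⟩ := hmin x''
        have hjS : j ∈ S := by
          by_contra hjn
          have hxj : x'' j = x j := by simp [hx'', hjn]
          rw [hxj] at hj
          have := hlow x j
          linarith
        refine ⟨j, hjS, ?_⟩
        rw [hf, hf]
        exact key _ _ _ hlt (hlow x j)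
      · obtain ⟨i, hi⟩ := hS
        refine ⟨i, hi, ?_⟩
        rw [hf, hf, heq]
  · -- 3-approximation
    intro x b hb
    obtain ⟨i₀, hi₀⟩ := hmin x
    set R := ⨆ i, |b - x i| with hR
    have hbdd : BddAbove (Set.range fun i => |b - x i|) := Finite.bddAbove_range _
    have hRi : ∀ i, |b - x i| ≤ R := fun i => le_ciSup hbdd i
    apply ciSup_le
    intro i
    rw [hf]
    have h1 : |g (lt n x) - x i| ≤ |g (lt n x) - lt n x| + |lt n x - x i| :=
      abs_sub_le _ _ _
    have h2 : |g (lt n x) - lt n x| ≤ R := by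
      calc |g (lt n x) - lt n x| ≤ |b - lt n x| := (hg (lt n x)).2 b hb
        _ = |b - x i₀| := by rw [hi₀]
        _ ≤ R := hRi i₀
    have h3 : |lt n x - x i| ≤ 2 * R := by
      have h4 : |lt n x - x i| ≤ |lt n x - b| + |b - x i| := abs_sub_le _ _ _
      have h5 : |lt n x - b| ≤ R := by
        rw [abs_sub_comm, hi₀]; exact hRi i₀
      linarith [hRi i]
    linarith
end

section
/- Approximation of Mechanism 3 when some agent wants both facilities: suppose |N_{1,2}| > 0 and let f be Mechanism 3, which then outputs a pair (y_1, y_2) ∈ AP minimizing max(|y_1 − med(x_{N_{1,2}})|, |y_2 − med(x_{N_{1,2}})|). Then for every location profile x ∈ ℝ^n, sc(f(x, p), (x, p)) ≤ (2n + 1) · sc(y, (x, p)) for every feasible outcome y; i.e., the sum cost of Mechanism 3 is at most (2n+1) times the optimal sum cost. -/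
/-- Max-variant cost of an agent at `t` with preference set `P ⊆ {F₁, F₂}`
(facility `k` placed at `y k`): the distance to the farthest facility in `P`. -/
noncomputable def pcost (P : Finset (Fin 2)) (hP : P.Nonempty) (y : Fin 2 → ℝ)
    (t : ℝ) : ℝ :=
  P.sup' hP fun k => |y k - t|

/-- Facility positions determined by a pair of (1-based) indices into the
alternative multiset `{a 1, …, a m}`. -/
noncomputable def place (a : ℕ → ℝ) (jj : ℕ × ℕ) : Fin 2 → ℝ := ![a jj.1, a jj.2]

/-- A feasible index pair: two distinct copies among the `m` alternatives. -/
def IdxOK (m : ℕ) (jj : ℕ × ℕ) : Prop :=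
  1 ≤ jj.1 ∧ jj.1 ≤ m ∧ 1 ≤ jj.2 ∧ jj.2 ≤ m ∧ jj.1 ≠ jj.2

/-- `jj = (k, k+1)` is an adjacent pair minimizing the Max-variant cost at `t`
among all adjacent pairs. -/
def IsPeakIdx (m : ℕ) (a : ℕ → ℝ) (jj : ℕ × ℕ) (t : ℝ) : Prop :=
  1 ≤ jj.1 ∧ jj.1 < m ∧ jj.2 = jj.1 + 1 ∧
    ∀ j : ℕ, 1 ≤ j → j < m →
      max |a jj.1 - t| |a (jj.1 + 1) - t| ≤ max |a j - t| |a (j + 1) - t|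

/-- The `⌈|S|/2⌉`-th smallest value of `x` on the index set `S`. -/
noncomputable def medOf {n : ℕ} (x : Fin n → ℝ) (S : Finset (Fin n)) : ℝ :=
  ((S.val.map x).sort (· ≤ ·)).getD ((S.card - 1) / 2) 0

/-!
The median `t` of `x_{N_{1,2}}` is the location of an agent `i₀` who wants both facilities, so
under any feasible `y` this agent pays `C = max_k |y_k - t| ≤ sc(y)`. Between two alternatives
there is always an adjacent pair at least as close to `t` (distances to `t` along a sorted list
are bounded by the two endpoints), so the facilities chosen by the mechanism are within `C` of
`t` as well. By the triangle inequality through `t` and through a facility of `y`, each agent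
then pays at most its cost under `y` plus `2C`, and summing gives `sc(y) + 2nC ≤ (2n+1) sc(y)`.
-/

lemma le_pcost (P : Finset (Fin 2)) (hP : P.Nonempty) (y : Fin 2 → ℝ) (t : ℝ)
    {k : Fin 2} (hk : k ∈ P) : |y k - t| ≤ pcost P hP y t :=
  Finset.le_sup' (fun k => |y k - t|) hk

lemma pcost_nonneg (P : Finset (Fin 2)) (hP : P.Nonempty) (y : Fin 2 → ℝ) (t : ℝ) :
    0 ≤ pcost P hP y t :=
  (abs_nonneg _).trans (le_pcost P hP y t hP.choose_spec)

lemma pcost_le_add_of_forall_abs_sub_le (P : Finset (Fin 2)) (hP : P.Nonempty)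
    {y z : Fin 2 → ℝ} {t C : ℝ} (hy : ∀ k, |y k - t| ≤ C) (hz : ∀ k, |z k - t| ≤ C) (s : ℝ) :
    pcost P hP z s ≤ pcost P hP y s + 2 * C := by
  obtain ⟨k₀, hk₀⟩ := hP
  have hts : |t - s| ≤ C + pcost P ⟨k₀, hk₀⟩ y s :=
    calc |t - s| ≤ |t - y k₀| + |y k₀ - s| := abs_sub_le _ _ _
      _ = |y k₀ - t| + |y k₀ - s| := by rw [abs_sub_comm]
      _ ≤ C + pcost P ⟨k₀, hk₀⟩ y s := add_le_add (hy k₀) (le_pcost P _ y s hk₀)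
  refine Finset.sup'_le _ _ fun k _ => ?_
  calc |z k - s| ≤ |z k - t| + |t - s| := abs_sub_le _ _ _
    _ ≤ pcost P ⟨k₀, hk₀⟩ y s + 2 * C := by linarith [hz k]

lemma medOf_mem {n : ℕ} (x : Fin n → ℝ) {S : Finset (Fin n)} (hS : S.Nonempty) :
    ∃ i ∈ S, x i = medOf x S := by
  set l := (S.val.map x).sort (· ≤ ·)
  have hlen : l.length = S.card := by simp [l]
  have hidx : (S.card - 1) / 2 < l.length := by
    have := hS.card_pos
    omega
  have hmem : medOf x S ∈ l := by
    rw [medOf, List.getD_eq_getElem l 0 hidx]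
    exact List.getElem_mem _
  simpa [l] using hmem

section Adjacent

variable {m : ℕ} {a : ℕ → ℝ}

lemma exists_adjacent_max_abs_sub_le (ha : ∀ j k : ℕ, 1 ≤ j → j ≤ k → k ≤ m → a j ≤ a k)
    (t : ℝ) {u v : ℕ} (hu : 1 ≤ u) (huv : u < v) (hv : v ≤ m) :
    ∃ j, u ≤ j ∧ j < v ∧ max |a j - t| |a (j + 1) - t| ≤ max |a u - t| |a v - t| := by
  induction v, huv using Nat.le_induction with
  | base => exact ⟨u, le_rfl, u.lt_succ_self, le_rfl⟩
  | succ v huv ih =>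
    obtain ⟨j, huj, hjv, hj⟩ := ih (by omega)
    have hmid : |a v - t| ≤ max |a u - t| |a (v + 1) - t| :=
      abs_le_max_abs_abs (sub_le_sub_right (ha u v hu (by omega) (by omega)) t)
        (sub_le_sub_right (ha v (v + 1) (by omega) v.le_succ hv) t)
    exact ⟨j, huj, by omega, hj.trans (max_le (le_max_left _ _) hmid)⟩

lemma IsPeakIdx.abs_sub_le (ha : ∀ j k : ℕ, 1 ≤ j → j ≤ k → k ≤ m → a j ≤ a k)
    {jj' jj : ℕ × ℕ} {t : ℝ} (hpeak : IsPeakIdx m a jj' t) (hjj : IdxOK m jj) (k : Fin 2) :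
    |place a jj' k - t| ≤ max |place a jj 0 - t| |place a jj 1 - t| := by
  obtain ⟨-, -, hsucc, hmin⟩ := hpeak
  obtain ⟨h₁, h₁m, h₂, h₂m, hne⟩ := hjj
  have hpeak_le : max |a jj'.1 - t| |a jj'.2 - t| ≤ max |a jj.1 - t| |a jj.2 - t| := by
    rw [hsucc]
    rcases hne.lt_or_gt with hlt | hlt
    · obtain ⟨j, hj, hjv, hle⟩ := exists_adjacent_max_abs_sub_le ha t h₁ hlt h₂m
      exact (hmin j (by omega) (by omega)).trans hle
    · obtain ⟨j, hj, hjv, hle⟩ := exists_adjacent_max_abs_sub_le ha t h₂ hlt h₁m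
      exact (hmin j (by omega) (by omega)).trans (hle.trans (max_comm _ _).le)
  fin_cases k
  · exact (le_max_left _ _).trans hpeak_le
  · exact (le_max_right _ _).trans hpeak_le

end Adjacent

lemma sum_le_two_mul_card_add_one_mul {ι : Type*} [Fintype ι] {f g : ι → ℝ} {C : ℝ}
    (hfg : ∀ i, f i ≤ g i + 2 * C) (hC : C ≤ ∑ i, g i) :
    ∑ i, f i ≤ (2 * (Fintype.card ι : ℝ) + 1) * ∑ i, g i := by
  have hsum : ∑ i, f i ≤ ∑ i, g i + Fintype.card ι * (2 * C) := by
    simpa [Finset.sum_add_distrib] using Finset.sum_le_sum fun i (_ : i ∈ Finset.univ) => hfg i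
  nlinarith [(Fintype.card ι).cast_nonneg (α := ℝ)]

theorem stmt_16_general (n m : ℕ) (a : ℕ → ℝ)
    (ha : ∀ j k : ℕ, 1 ≤ j → j ≤ k → k ≤ m → a j ≤ a k)
    (p : Fin n → Finset (Fin 2)) (hp : ∀ i, (p i).Nonempty)
    (N12 : Finset (Fin n))
    (hN12 : N12 = Finset.univ.filter fun i => p i = ({0, 1} : Finset (Fin 2)))
    (hne : N12.Nonempty)
    (f : (Fin n → ℝ) → ℕ × ℕ)
    -- Mechanism 3 (case `|N_{1,2}| > 0`): output an adjacent pair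
    -- minimizing the Max-variant cost at `med (x_{N_{1,2}})`
    (hf : ∀ x : Fin n → ℝ, IsPeakIdx m a (f x) (medOf x N12))
    (x : Fin n → ℝ) (jj : ℕ × ℕ) (hjj : IdxOK m jj) :
    (∑ i, pcost (p i) (hp i) (place a (f x)) (x i)) ≤
      (2 * (n : ℝ) + 1) * ∑ i, pcost (p i) (hp i) (place a jj) (x i) := by
  obtain ⟨i₀, hi₀, hmed⟩ := medOf_mem x hne
  have hboth : p i₀ = {0, 1} := by simpa [hN12] using hi₀
  set C := pcost (p i₀) (hp i₀) (place a jj) (x i₀)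
  have hy : ∀ k, |place a jj k - medOf x N12| ≤ C := fun k =>
    hmed ▸ le_pcost _ _ _ _ (by fin_cases k <;> simp [hboth])
  have hz : ∀ k, |place a (f x) k - medOf x N12| ≤ C := fun k =>
    ((hf x).abs_sub_le ha hjj k).trans (max_le (hy 0) (hy 1))
  simpa using sum_le_two_mul_card_add_one_mul
    (fun i => pcost_le_add_of_forall_abs_sub_le (p i) (hp i) hy hz (x i))
    (Finset.single_le_sum (fun i _ => pcost_nonneg _ _ _ _) (Finset.mem_univ i₀))

theorem stmt_16 (n m : ℕ) (hn : 0 < n) (hm : 2 ≤ m) (a : ℕ → ℝ)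
    (ha : ∀ j k : ℕ, 1 ≤ j → j ≤ k → k ≤ m → a j ≤ a k)
    (p : Fin n → Finset (Fin 2)) (hp : ∀ i, (p i).Nonempty)
    (N12 : Finset (Fin n))
    (hN12 : N12 = Finset.univ.filter fun i => p i = ({0, 1} : Finset (Fin 2)))
    (hne : N12.Nonempty)
    (f : (Fin n → ℝ) → ℕ × ℕ)
    -- Mechanism 3 (case `|N_{1,2}| > 0`): output an adjacent pair
    -- minimizing the Max-variant cost at `med (x_{N_{1,2}})`
    (hf : ∀ x : Fin n → ℝ, IsPeakIdx m a (f x) (medOf x N12))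
    (x : Fin n → ℝ) (jj : ℕ × ℕ) (hjj : IdxOK m jj) :
    (∑ i, pcost (p i) (hp i) (place a (f x)) (x i)) ≤
      (2 * (n : ℝ) + 1) * ∑ i, pcost (p i) (hp i) (place a jj) (x i) :=
  stmt_16_general n m a ha p hp N12 hN12 hne f hf x jj hjj
end

section
/- Approximation of Mechanism 3 when no agent wants both facilities: suppose |N_{1,2}| = 0, N_1 ≠ ∅, N_2 ≠ ∅, and |N_1| ≥ |N_2| (the case |N_1| < |N_2| is symmetric). Let f be Mechanism 3, which then outputs y_1 ∈ argmin_{y∈A} |y − med(x_{N_1})| and y_2 ∈ argmin_{y ∈ A∖{y_1}} |y − med(x_{N_2})| (A∖{y_1} removes one copy of y_1). Then for every location profile x ∈ ℝ^n, sc(f(x, p), (x, p)) ≤ 15 · sc(y, (x, p)) for every feasible outcome y. -/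
/-- `j₀` indexes a closest alternative to `t` among `a 1, …, a m`. -/
def IsClosest (m : ℕ) (a : ℕ → ℝ) (j₀ : ℕ) (t : ℝ) : Prop :=
  1 ≤ j₀ ∧ j₀ ≤ m ∧ ∀ j : ℕ, 1 ≤ j → j ≤ m → |a j₀ - t| ≤ |a j - t|

/-- `j₀` indexes a closest alternative to `t` among `a 1, …, a m` with one copy
(of index `j₁`) removed. -/
def IsClosestAvoid (m : ℕ) (a : ℕ → ℝ) (j₁ j₀ : ℕ) (t : ℝ) : Prop :=
  1 ≤ j₀ ∧ j₀ ≤ m ∧ j₀ ≠ j₁ ∧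
    ∀ j : ℕ, 1 ≤ j → j ≤ m → j ≠ j₁ → |a j₀ - t| ≤ |a j - t|

lemma list_sum_map_getD (l : List ℝ) (g : ℝ → ℝ) :
    (l.map g).sum = ∑ i ∈ Finset.range l.length, g (l.getD i 0) := by
  induction l with
  | nil => simp
  | cons a l ih =>
      simp [Finset.sum_range_succ', ih, add_comm]

lemma getD_mono {l : List ℝ} (hl : l.Pairwise (· ≤ ·)) {i j : ℕ} (hij : i ≤ j)
    (hj : j < l.length) : l.getD i 0 ≤ l.getD j 0 := by
  rw [List.getD_eq_getElem l 0 (lt_of_le_of_lt hij hj), List.getD_eq_getElem l 0 hj]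
  exact hl.rel_get_of_le (a := ⟨i, lt_of_le_of_lt hij hj⟩) (b := ⟨j, hj⟩) hij

lemma sorted_median_min (l : List ℝ) (hl : l.Pairwise (· ≤ ·)) (t : ℝ) :
    ∑ i ∈ Finset.range l.length, |l.getD i 0 - l.getD ((l.length - 1) / 2) 0|
      ≤ ∑ i ∈ Finset.range l.length, |l.getD i 0 - t| := by
  set c := l.length with hc
  set k := (c - 1) / 2 with hk
  set M := l.getD k 0 with hM
  have key : ∀ i ∈ Finset.range c,
      |l.getD i 0 - M| + |l.getD (c - 1 - i) 0 - M|
        ≤ |l.getD i 0 - t| + |l.getD (c - 1 - i) 0 - t| := by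
    intro i hi
    rw [Finset.mem_range] at hi
    set j := c - 1 - i with hj
    have hjc : j < c := by omega
    have hsum : i + j = c - 1 := by omega
    -- min ≤ k ≤ max
    have h1 : min i j ≤ k := by omega
    have h2 : k ≤ max i j := by omega
    have hkc : k < c := by omega
    have hu : l.getD (min i j) 0 ≤ M := getD_mono hl h1 hkc
    have hv : M ≤ l.getD (max i j) 0 :=
      getD_mono hl h2 (by omega)
    rcases le_total i j with h | h
    · rw [min_eq_left h] at hu; rw [max_eq_right h] at hv
      have := abs_sub_abs_le_abs_sub (l.getD j 0 - t) (l.getD i 0 - t)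
      rw [abs_of_nonpos (by linarith), abs_of_nonneg (by linarith)]
      have htri : l.getD j 0 - l.getD i 0 ≤ |l.getD i 0 - t| + |l.getD j 0 - t| := by
        have h1 := abs_sub_abs_le_abs_sub (l.getD j 0) t
        have h2 := neg_abs_le (l.getD i 0 - t)
        have h3 := neg_abs_le (l.getD j 0 - t)
        have h4 := le_abs_self (l.getD j 0 - t)
        linarith
      linarith
    · rw [min_eq_right h] at hu; rw [max_eq_left h] at hv
      rw [abs_of_nonneg (by linarith), abs_of_nonpos (by linarith)]
      have h2 := neg_abs_le (l.getD j 0 - t)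
      have h4 := le_abs_self (l.getD i 0 - t)
      linarith
  have hrefl : ∀ u : ℝ, ∑ i ∈ Finset.range c, |l.getD (c - 1 - i) 0 - u|
      = ∑ i ∈ Finset.range c, |l.getD i 0 - u| := fun u =>
    Finset.sum_range_reflect (fun i => |l.getD i 0 - u|) c
  have := Finset.sum_le_sum key
  rw [Finset.sum_add_distrib, Finset.sum_add_distrib, hrefl, hrefl] at this
  linarith

lemma medOf_min {n : ℕ} (x : Fin n → ℝ) (S : Finset (Fin n)) (t : ℝ) :
    ∑ i ∈ S, |x i - medOf x S| ≤ ∑ i ∈ S, |x i - t| := by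
  set l := (S.val.map x).sort (· ≤ ·) with hl
  have hlen : l.length = S.card := by
    rw [hl, Multiset.length_sort, Multiset.card_map]; rfl
  have hsum : ∀ g : ℝ → ℝ, ∑ i ∈ S, g (x i)
      = ∑ i ∈ Finset.range l.length, g (l.getD i 0) := by
    intro g
    rw [← list_sum_map_getD]
    have : (S.val.map x) = (l : Multiset ℝ) := (Multiset.sort_eq _ _).symm
    calc ∑ i ∈ S, g (x i) = ((S.val.map x).map g).sum := by
          rw [Finset.sum, Multiset.map_map]; rfl
      _ = (l.map g).sum := by rw [this]; rfl
  have hmed : medOf x S = l.getD ((l.length - 1) / 2) 0 := by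
    rw [medOf, ← hl, hlen]
  rw [hsum (fun z => |z - medOf x S|), hsum (fun z => |z - t|), hmed]
  exact sorted_median_min l (Multiset.pairwise_sort _ _) t

lemma pcost_zero (P : Finset (Fin 2)) (hP : P.Nonempty) (y : Fin 2 → ℝ) (t : ℝ)
    (h : P = {0}) : pcost P hP y t = |y 0 - t| := by
  subst h; simp [pcost]

lemma pcost_one (P : Finset (Fin 2)) (hP : P.Nonempty) (y : Fin 2 → ℝ) (t : ℝ)
    (h : P = {1}) : pcost P hP y t = |y 1 - t| := by
  subst h; simp [pcost]

theorem stmt_17 (n m : ℕ) (hn : 2 ≤ n) (hm : 2 ≤ m) (a : ℕ → ℝ)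
    (ha : ∀ j k : ℕ, 1 ≤ j → j ≤ k → k ≤ m → a j ≤ a k)
    (p : Fin n → Finset (Fin 2)) (hp : ∀ i, (p i).Nonempty)
    (N1 N2 N12 : Finset (Fin n))
    (hN1 : N1 = Finset.univ.filter fun i => p i = ({0} : Finset (Fin 2)))
    (hN2 : N2 = Finset.univ.filter fun i => p i = ({1} : Finset (Fin 2)))
    (hN12 : N12 = Finset.univ.filter fun i => p i = ({0, 1} : Finset (Fin 2)))
    (hempty : N12 = ∅) (hN1ne : N1.Nonempty) (hN2ne : N2.Nonempty)
    (hcard : N2.card ≤ N1.card)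
    (x : Fin n → ℝ) (j1 j2 : ℕ)
    -- Mechanism 3 output: `y₁ = a j1` closest to `med (x_{N₁})` in `A`, and
    -- `y₂ = a j2` closest to `med (x_{N₂})` in `A` minus one copy of `a j1`
    (hj1 : IsClosest m a j1 (medOf x N1))
    (hj2 : IsClosestAvoid m a j1 j2 (medOf x N2))
    (jj : ℕ × ℕ) (hjj : IdxOK m jj) :
    (∑ i, pcost (p i) (hp i) (place a (j1, j2)) (x i)) ≤
      15 * ∑ i, pcost (p i) (hp i) (place a jj) (x i) := by
  classical
  obtain ⟨hjj1, hjj1m, hjj2, hjj2m, hjjne⟩ := hjj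
  -- classification of agents
  have hall : ∀ P : Finset (Fin 2), P.Nonempty →
      P = {0} ∨ P = {1} ∨ P = ({0, 1} : Finset (Fin 2)) := by decide
  have hclass : ∀ i, p i = {0} ∨ p i = ({1} : Finset (Fin 2)) := by
    intro i
    have h3 : p i ≠ ({0, 1} : Finset (Fin 2)) := by
      intro h
      have : i ∈ N12 := by rw [hN12]; simp [h]
      rw [hempty] at this; exact absurd this (Finset.notMem_empty i)
    rcases hall _ (hp i) with h | h | h
    · exact Or.inl h
    · exact Or.inr h
    · exact absurd h h3
  have hmem1 : ∀ i, i ∈ N1 ↔ p i = ({0} : Finset (Fin 2)) := by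
    intro i; rw [hN1]; simp
  have hmem2 : ∀ i, i ∈ N2 ↔ p i = ({1} : Finset (Fin 2)) := by
    intro i; rw [hN2]; simp
  have hunion : N1 ∪ N2 = Finset.univ := by
    ext i
    simp only [Finset.mem_union, Finset.mem_univ, iff_true, hmem1, hmem2]
    exact hclass i
  have hdisj : Disjoint N1 N2 := by
    rw [Finset.disjoint_left]
    intro i h1 h2
    rw [hmem1] at h1; rw [hmem2] at h2
    rw [h1] at h2
    exact absurd h2 (by decide)
  -- sum splitting
  have hsplit : ∀ y : Fin 2 → ℝ,
      ∑ i, pcost (p i) (hp i) y (x i)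
        = ∑ i ∈ N1, |y 0 - x i| + ∑ i ∈ N2, |y 1 - x i| := by
    intro y
    rw [← hunion, Finset.sum_union hdisj]
    congr 1
    · exact Finset.sum_congr rfl fun i hi => pcost_zero _ _ _ _ ((hmem1 i).1 hi)
    · exact Finset.sum_congr rfl fun i hi => pcost_one _ _ _ _ ((hmem2 i).1 hi)
  have hplace1 : ∀ jj : ℕ × ℕ, place a jj 0 = a jj.1 := by intro jj; simp [place]
  have hplace2 : ∀ jj : ℕ × ℕ, place a jj 1 = a jj.2 := by intro jj; simp [place]
  rw [hsplit, hsplit, hplace1, hplace1, hplace2, hplace2]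
  set m1 := medOf x N1
  set m2 := medOf x N2
  set b1 := a jj.1 with hb1
  set b2 := a jj.2 with hb2
  set O1 := ∑ i ∈ N1, |b1 - x i| with hO1
  set O2 := ∑ i ∈ N2, |b2 - x i| with hO2
  set D1 := ∑ i ∈ N1, |x i - m1| with hD1
  set D2 := ∑ i ∈ N2, |x i - m2| with hD2
  have hO1nn : 0 ≤ O1 := Finset.sum_nonneg fun i _ => abs_nonneg _
  have hO2nn : 0 ≤ O2 := Finset.sum_nonneg fun i _ => abs_nonneg _
  have hD1O1 : D1 ≤ O1 := by
    have := medOf_min x N1 b1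
    calc D1 ≤ ∑ i ∈ N1, |x i - b1| := this
      _ = O1 := Finset.sum_congr rfl fun i _ => abs_sub_comm _ _
  have hD2O2 : D2 ≤ O2 := by
    have := medOf_min x N2 b2
    calc D2 ≤ ∑ i ∈ N2, |x i - b2| := this
      _ = O2 := Finset.sum_congr rfl fun i _ => abs_sub_comm _ _
  have hC1 : |a j1 - m1| ≤ |b1 - m1| := hj1.2.2 jj.1 hjj1 hjj1m
  -- facility 1 cost
  have hA1 : ∑ i ∈ N1, |a j1 - x i| ≤ O1 + 2 * D1 := by
    have step : ∀ i ∈ N1, |a j1 - x i| ≤ |b1 - x i| + 2 * |x i - m1| := by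
      intro i _
      have t1 : |a j1 - x i| ≤ |a j1 - m1| + |m1 - x i| := abs_sub_le _ _ _
      have t2 : |b1 - m1| ≤ |b1 - x i| + |x i - m1| := abs_sub_le _ _ _
      have t3 : |m1 - x i| = |x i - m1| := abs_sub_comm _ _
      linarith
    calc ∑ i ∈ N1, |a j1 - x i| ≤ ∑ i ∈ N1, (|b1 - x i| + 2 * |x i - m1|) :=
          Finset.sum_le_sum step
      _ = O1 + 2 * D1 := by rw [Finset.sum_add_distrib, ← Finset.mul_sum]
  -- facility 2 cost: two cases
  have hA2 : ∑ i ∈ N2, |a j2 - x i| ≤ 4 * O1 + 3 * O2 := by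
    by_cases hcase : jj.2 ≠ j1
    · -- a jj.2 is available
      have hC2 : |a j2 - m2| ≤ |b2 - m2| := hj2.2.2.2 jj.2 hjj2 hjj2m hcase
      have step : ∀ i ∈ N2, |a j2 - x i| ≤ |b2 - x i| + 2 * |x i - m2| := by
        intro i _
        have t1 : |a j2 - x i| ≤ |a j2 - m2| + |m2 - x i| := abs_sub_le _ _ _
        have t2 : |b2 - m2| ≤ |b2 - x i| + |x i - m2| := abs_sub_le _ _ _
        have t3 : |m2 - x i| = |x i - m2| := abs_sub_comm _ _
        linarith
      calc ∑ i ∈ N2, |a j2 - x i| ≤ ∑ i ∈ N2, (|b2 - x i| + 2 * |x i - m2|) :=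
            Finset.sum_le_sum step
        _ = O2 + 2 * D2 := by rw [Finset.sum_add_distrib, ← Finset.mul_sum]
        _ ≤ 4 * O1 + 3 * O2 := by linarith
    · -- jj.2 = j1 : use a jj.1, which is distinct from j1
      push_neg at hcase
      have hne1 : jj.1 ≠ j1 := fun h => hjjne (h.trans hcase.symm)
      have hC2 : |a j2 - m2| ≤ |b1 - m2| := hj2.2.2.2 jj.1 hjj1 hjj1m hne1
      have hbb : b2 = a j1 := by rw [hb2, hcase]
      have hbdist : |b1 - b2| ≤ 2 * |b1 - m1| := by
        have t1 : |b1 - b2| ≤ |b1 - m1| + |m1 - b2| := abs_sub_le _ _ _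
        have t2 : |m1 - b2| = |a j1 - m1| := by rw [hbb, abs_sub_comm]
        linarith
      -- card bound : (N1.card : ℝ) * |b1 - m1| ≤ O1 + D1
      have hcb : (N1.card : ℝ) * |b1 - m1| ≤ O1 + D1 := by
        have step : ∀ i ∈ N1, |b1 - m1| ≤ |b1 - x i| + |x i - m1| :=
          fun i _ => abs_sub_le _ _ _
        have := Finset.sum_le_sum step
        rw [Finset.sum_const, Finset.sum_add_distrib, nsmul_eq_mul] at this
        exact this
      have hcards : (N2.card : ℝ) ≤ (N1.card : ℝ) := by exact_mod_cast hcard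
      have step : ∀ i ∈ N2, |a j2 - x i| ≤ |b1 - b2| + |b2 - x i| + 2 * |x i - m2| := by
        intro i _
        have t1 : |a j2 - x i| ≤ |a j2 - m2| + |m2 - x i| := abs_sub_le _ _ _
        have t2 : |b1 - m2| ≤ |b1 - x i| + |x i - m2| := abs_sub_le _ _ _
        have t3 : |b1 - x i| ≤ |b1 - b2| + |b2 - x i| := abs_sub_le _ _ _
        have t4 : |m2 - x i| = |x i - m2| := abs_sub_comm _ _
        linarith
      have hsum2 : ∑ i ∈ N2, |a j2 - x i|
          ≤ (N2.card : ℝ) * |b1 - b2| + O2 + 2 * D2 := by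
        calc ∑ i ∈ N2, |a j2 - x i|
            ≤ ∑ i ∈ N2, (|b1 - b2| + |b2 - x i| + 2 * |x i - m2|) :=
              Finset.sum_le_sum step
          _ = (N2.card : ℝ) * |b1 - b2| + O2 + 2 * D2 := by
              rw [Finset.sum_add_distrib, Finset.sum_add_distrib,
                Finset.sum_const, nsmul_eq_mul, ← Finset.mul_sum]
      have habs : 0 ≤ |b1 - m1| := abs_nonneg _
      have hn2b : (N2.card : ℝ) * |b1 - b2| ≤ 4 * O1 := by
        calc (N2.card : ℝ) * |b1 - b2| ≤ (N1.card : ℝ) * (2 * |b1 - m1|) :=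
              mul_le_mul hcards hbdist (abs_nonneg _) (Nat.cast_nonneg _)
          _ = 2 * ((N1.card : ℝ) * |b1 - m1|) := by ring
          _ ≤ 2 * (O1 + D1) := by linarith
          _ ≤ 4 * O1 := by linarith
      linarith
  linarith
end
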